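/- Fix η ∈ (0,1) and α ∈ (0,1). Define ξ(β) = (1−β)·√(2/π)·exp(−(erfinv((1−α)/(1−β)))²) / ((α−ηβ)·√2·erfinv((1−α)/(1−β))) for β ∈ (0, α). Then ξ is strictly decreasing on (0, α). -/

import Mathlib

open Real MeasureTheory Filter Set

noncomputable def erf (y : ℝ) : ℝ := (2 / Real.sqrt π) * ∫ t in (0:ℝ)..y, Real.exp (-t ^ 2)

noncomputable def erfc (y : ℝ) : ℝ := (2 / Real.sqrt π) * ∫ t in Set.Ioi y, Real.exp (-t ^ 2)

noncomputable def erfinv : ℝ → ℝ := Function.invFun erf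

/-!
Put `g = erfinv ((1 - α) / (1 - β))`, which increases with `β`. The relation
`(1 - β) erf g = 1 - α` turns `ξ β` into `(1 - α) / √π` divided by
`D g = g e^{g²} ((α - η) erf g + η (1 - α))`, so it suffices that `D` increases on `g > 0`.
For `η ≤ α` every factor of `D` is monotone. For `α < η` write
`D g = α (1 - η) g e^{g²} + (η - α) g e^{g²} erfc g`; the last term increases because its
derivative `e^{g²} (1 + 2g²) erfc g - 2g/√π` is positive by the Mills-type bound
`erfc g > (2/√π) g e^{-g²} / (1 + 2g²)`. That bound holds because the difference of its two
sides has derivative `-(4/√π) e^{-g²} / (1 + 2g²)²` and tends to `0` at infinity.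
-/

open scoped Topology

lemma continuous_exp_neg_sq : Continuous fun t : ℝ => exp (-t ^ 2) := by fun_prop

lemma integrableOn_exp_neg_sq (s : Set ℝ) : IntegrableOn (fun t : ℝ => exp (-t ^ 2)) s := by
  simpa using (integrable_exp_neg_mul_sq one_pos).integrableOn

lemma integral_Ioi_zero_exp_neg_sq : ∫ t in Ioi (0 : ℝ), exp (-t ^ 2) = √π / 2 := by
  simpa using integral_gaussian_Ioi 1

lemma erf_zero : erf 0 = 0 := by simp [erf]

lemma hasDerivAt_erf (y : ℝ) : HasDerivAt erf (2 / √π * exp (-y ^ 2)) y :=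
  (continuous_exp_neg_sq.integral_hasStrictDerivAt 0 y).hasDerivAt.const_mul _

lemma erf_strictMono : StrictMono erf :=
  strictMono_of_deriv_pos fun y => by rw [(hasDerivAt_erf y).deriv]; positivity

lemma erf_add_erfc (y : ℝ) : erf y + erfc y = 1 := by
  rw [erf, erfc, ← mul_add, intervalIntegral.integral_interval_add_Ioi
    (integrableOn_exp_neg_sq _) (integrableOn_exp_neg_sq _), integral_Ioi_zero_exp_neg_sq]
  field_simp

lemma erfc_eq_one_sub_erf : erfc = fun y => 1 - erf y :=
  funext fun y => by linarith [erf_add_erfc y]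

lemma hasDerivAt_erfc (y : ℝ) : HasDerivAt erfc (-(2 / √π * exp (-y ^ 2))) y :=
  erfc_eq_one_sub_erf ▸ (hasDerivAt_erf y).const_sub 1

lemma tendsto_erf_atTop : Tendsto erf atTop (𝓝 1) := by
  have h := (intervalIntegral_tendsto_integral_Ioi 0 (integrableOn_exp_neg_sq _)
    tendsto_id).const_mul (2 / √π)
  have h_one : 2 / √π * (√π / 2) = 1 := by field_simp
  rw [integral_Ioi_zero_exp_neg_sq, h_one] at h
  exact h

lemma tendsto_erfc_atTop : Tendsto erfc atTop (𝓝 0) := by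
  simpa [erfc_eq_one_sub_erf] using tendsto_erf_atTop.const_sub 1

lemma erf_erfinv {x : ℝ} (hx : x ∈ Ioo (0 : ℝ) 1) : erf (erfinv x) = x := by
  obtain ⟨M, hxM, hM⟩ := ((tendsto_erf_atTop.eventually (eventually_gt_nhds hx.2)).and
    (eventually_ge_atTop 0)).exists
  have hcont : ContinuousOn erf (Icc 0 M) :=
    fun y _ => (hasDerivAt_erf y).continuousAt.continuousWithinAt
  obtain ⟨y, -, hy⟩ := intermediate_value_Icc hM hcont
    (show x ∈ Icc (erf 0) (erf M) by rw [erf_zero]; exact ⟨hx.1.le, hxM.le⟩)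
  exact Function.invFun_eq ⟨y, hy⟩

lemma erfinv_strictMonoOn : StrictMonoOn erfinv (Ioo 0 1) := fun x hx y hy hxy => by
  rwa [← erf_strictMono.lt_iff_lt, erf_erfinv hx, erf_erfinv hy]

lemma erfinv_pos {x : ℝ} (hx : x ∈ Ioo (0 : ℝ) 1) : 0 < erfinv x := by
  rw [← erf_strictMono.lt_iff_lt, erf_zero, erf_erfinv hx]
  exact hx.1

noncomputable def millsBound (y : ℝ) : ℝ := y * exp (-y ^ 2) / (1 + 2 * y ^ 2)

lemma hasDerivAt_millsBound (y : ℝ) :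
    HasDerivAt millsBound (exp (-y ^ 2) * (2 / (1 + 2 * y ^ 2) ^ 2 - 1)) y := by
  have hexp : HasDerivAt (fun y : ℝ => exp (-y ^ 2)) (exp (-y ^ 2) * -(2 * y)) y := by
    simpa using ((hasDerivAt_pow 2 y).neg).exp
  have hden : HasDerivAt (fun y : ℝ => 1 + 2 * y ^ 2) (2 * (2 * y)) y := by
    simpa using ((hasDerivAt_pow 2 y).const_mul 2).const_add 1
  refine (((hasDerivAt_id' y).fun_mul hexp).fun_div hden (by positivity)).congr_deriv ?_
  field_simp
  ring

lemma tendsto_millsBound_atTop : Tendsto millsBound atTop (𝓝 0) := by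
  have h_exp : Tendsto (fun y : ℝ => exp (-y ^ 2)) atTop (𝓝 0) :=
    tendsto_exp_neg_atTop_nhds_zero.comp (tendsto_pow_atTop two_ne_zero)
  refine tendsto_of_tendsto_of_tendsto_of_le_of_le' tendsto_const_nhds h_exp ?_ ?_
  · filter_upwards [eventually_ge_atTop 0] with y hy
    unfold millsBound
    positivity
  · filter_upwards with y
    rw [millsBound, div_le_iff₀ (by positivity)]
    nlinarith [exp_pos (-y ^ 2), sq_nonneg (y - 1)]

lemma two_div_sqrt_pi_mul_millsBound_lt_erfc (y : ℝ) : 2 / √π * millsBound y < erfc y := by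
  set gap := fun y => erfc y - 2 / √π * millsBound y
  have h_deriv (y : ℝ) :
      HasDerivAt gap (-(2 / √π * (2 * exp (-y ^ 2) / (1 + 2 * y ^ 2) ^ 2))) y := by
    refine ((hasDerivAt_erfc y).sub
      ((hasDerivAt_millsBound y).const_mul (2 / √π))).congr_deriv ?_
    ring
  have h_anti : StrictAnti gap := strictAnti_of_deriv_neg fun y => by
    rw [(h_deriv y).deriv, neg_lt_zero]
    positivity
  have h_lim : Tendsto gap atTop (𝓝 0) := by
    simpa using tendsto_erfc_atTop.sub (tendsto_millsBound_atTop.const_mul (2 / √π))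
  have h_nonneg : 0 ≤ gap (y + 1) := h_anti.antitone.le_of_tendsto h_lim (y + 1)
  have h_lt : gap (y + 1) < gap y := h_anti (lt_add_one y)
  simp only [gap] at h_nonneg h_lt
  linarith

lemma strictMonoOn_mul_exp_sq : StrictMonoOn (fun g : ℝ => g * exp (g ^ 2)) (Ici 0) :=
  fun _ ha _ _ hab => mul_lt_mul hab (exp_le_exp.2 (pow_le_pow_left₀ ha hab.le 2)) (exp_pos _)
    (ha.trans hab.le)

lemma strictMono_mul_exp_sq_mul_erfc : StrictMono fun g : ℝ => g * exp (g ^ 2) * erfc g := by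
  refine strictMono_of_deriv_pos fun g => ?_
  have h_cancel : exp (g ^ 2) * exp (-g ^ 2) = 1 := by rw [← exp_add]; simp
  have h_deriv : HasDerivAt (fun g : ℝ => g * exp (g ^ 2) * erfc g)
      (exp (g ^ 2) * (1 + 2 * g ^ 2) * erfc g - 2 / √π * g) g := by
    have hexp : HasDerivAt (fun g : ℝ => exp (g ^ 2)) (exp (g ^ 2) * (2 * g)) g := by
      simpa using (hasDerivAt_pow 2 g).exp
    refine (((hasDerivAt_id' g).fun_mul hexp).fun_mul (hasDerivAt_erfc g)).congr_deriv ?_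
    linear_combination -(2 / √π * g) * h_cancel
  have h_mills := two_div_sqrt_pi_mul_millsBound_lt_erfc g
  rw [millsBound, mul_div_assoc', div_lt_iff₀ (by positivity)] at h_mills
  have h_scaled := mul_lt_mul_of_pos_left h_mills (exp_pos (g ^ 2))
  rw [h_deriv.deriv]
  linear_combination h_scaled - (2 / √π * g) * h_cancel

noncomputable def xiDenom (η α g : ℝ) : ℝ := g * exp (g ^ 2) * ((α - η) * erf g + η * (1 - α))

section
variable {η α : ℝ}

lemma xiDenom_strictMonoOn (hη : η ∈ Ioo (0 : ℝ) 1) (hα : α ∈ Ioo (0 : ℝ) 1) :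
    StrictMonoOn (xiDenom η α) (Ici 0) := by
  intro a ha b hb hab
  have h_lin := strictMonoOn_mul_exp_sq ha hb hab
  obtain ⟨hη0, hη1⟩ := hη
  obtain ⟨hα0, hα1⟩ := hα
  rcases le_or_gt η α with h | h
  · have h_erf : 0 ≤ erf a := erf_zero ▸ erf_strictMono.monotone ha
    refine mul_lt_mul h_lin ?_ (by nlinarith) (mul_nonneg hb (exp_pos _).le)
    nlinarith [erf_strictMono hab]
  · have h_erfc (g : ℝ) : xiDenom η α g
        = α * (1 - η) * (g * exp (g ^ 2)) + (η - α) * (g * exp (g ^ 2) * erfc g) := by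
      rw [xiDenom, erfc_eq_one_sub_erf]
      ring
    rw [h_erfc, h_erfc]
    exact add_lt_add (mul_lt_mul_of_pos_left h_lin (by nlinarith))
      (mul_lt_mul_of_pos_left (strictMono_mul_exp_sq_mul_erfc hab) (by linarith))

lemma xiDenom_pos (hη : η ∈ Ioo (0 : ℝ) 1) (hα : α ∈ Ioo (0 : ℝ) 1) {g : ℝ} (hg : 0 < g) :
    0 < xiDenom η α g := by
  simpa [xiDenom] using xiDenom_strictMonoOn hη hα self_mem_Ici hg.le hg

lemma xi_eq_div_xiDenom {β g : ℝ} (hβ : β < 1) (hα : α < 1) (hg : erf g = (1 - α) / (1 - β)) :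
    (1 - β) * √(2 / π) * exp (-g ^ 2) / ((α - η * β) * √2 * g)
      = (1 - α) / √π / xiDenom η α g := by
  have hβ' : 1 - β ≠ 0 := by linarith
  have hα' : 1 - α ≠ 0 := by linarith
  have h_denom : xiDenom η α g = g * exp (g ^ 2) * erf g * (α - η * β) := by
    rw [xiDenom, hg]
    field_simp
    ring
  rw [h_denom, hg, exp_neg, sqrt_div' _ pi_pos.le]
  field_simp

end

theorem xi_strictAnti (η α : ℝ) (hη : η ∈ Set.Ioo (0:ℝ) 1) (hα : α ∈ Set.Ioo (0:ℝ) 1) :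
    StrictAntiOn
      (fun β => (1 - β) * Real.sqrt (2 / π) *
          Real.exp (-(erfinv ((1 - α) / (1 - β))) ^ 2) /
        ((α - η * β) * Real.sqrt 2 * erfinv ((1 - α) / (1 - β))))
      (Set.Ioo 0 α) := by
  have hα1 : α < 1 := hα.2
  have hu_mem : MapsTo (fun β => (1 - α) / (1 - β)) (Ioo 0 α) (Ioo 0 1) := fun β hβ =>
    ⟨div_pos (by linarith) (by linarith [hβ.2]),
      (div_lt_one (by linarith [hβ.2])).2 (by linarith [hβ.2])⟩
  have hu_mono : StrictMonoOn (fun β => (1 - α) / (1 - β)) (Ioo 0 α) :=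
    fun β₁ _ β₂ hβ₂ hlt => div_lt_div_of_pos_left (by linarith) (by linarith [hβ₂.2])
      (by linarith)
  have hD_mono := (xiDenom_strictMonoOn hη hα).comp (erfinv_strictMonoOn.comp hu_mono hu_mem)
    fun β hβ => (erfinv_pos (hu_mem hβ)).le
  have h_xi {β} (hβ : β ∈ Ioo 0 α) :=
    xi_eq_div_xiDenom (η := η) (by linarith [hβ.2]) hα1 (erf_erfinv (hu_mem hβ))
  intro β₁ hβ₁ β₂ hβ₂ hlt
  simp only [h_xi hβ₁, h_xi hβ₂]
  exact div_lt_div_of_pos_left (div_pos (by linarith) (by positivity))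
    (xiDenom_pos hη hα (erfinv_pos (hu_mem hβ₁))) (hD_mono hβ₁ hβ₂ hlt)
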